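/- Let (b_j)_{j≤n} ∈ ℝ^n and let (X_j)_{j≤n} be random variables (not necessarily independent) satisfying P(|X_j| > t) ≤ K e^{−t²/b_j²} for all t ≥ 0 and j ≤ n. Then E max_{j≤n} |X_j| ≲_K max_{j≤n} b_j^↓ √(ln(j+1)), where (b_j^↓) is the non-increasing rearrangement of (|b_j|). Conversely, if X_j ~ N(0, b_j²) are independent, then E max_{j≤n} |X_j| ≳ max_{j≤n} b_j^↓ √(ln(j+1)) with an absolute constant. -/

import Mathlib

/-!
Upper bound. Put `M = max_j b_j^↓ √(ln (j + 2))`. For `k ≥ 2`, a union bound over the tail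
hypothesis at `t = k √(ln (j + 2))` gives
`P(max_j |X_j| > k M) ≤ K ∑_j (j + 2)^(-k²) ≤ K 2^(-k)`;
summing these tails over the levels `2M, 4M, 6M, …` bounds `E max_j |X_j|` by `2 (1 + K) M`.

Lower bound. Fix `k` and let `t = b_k^↓ √(ln (k + 2))`. Bounding the density of `N(0, v)` from
below on `(s, s + √v]` gives `P(N(0, v) > s) ≥ c₀ e^(-s² / v)` with `c₀ = (2π)^(-1/2) e^(-1)`, so
each of the `k + 1` variables with the largest variances exceeds `t` with probability at least
`c₀ e^(-ln (k + 2)) = c₀ / (k + 2)`.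
By independence they all stay below `t` with probability at most
`(1 - c₀ / (k + 2))^(k + 1) ≤ e^(-c₀ / 2)`, and Markov's inequality gives
`E max_j |X_j| ≥ (1 - e^(-c₀ / 2)) t`.
-/

open MeasureTheory ProbabilityTheory Real
open scoped ENNReal NNReal Finset

lemma two_pow_mul_sq_le_pow_sq {x : ℝ} (hx : 2 ≤ x) {k : ℕ} (hk : 2 ≤ k) :
    2 ^ k * x ^ 2 ≤ x ^ (k ^ 2) :=
  calc 2 ^ k * x ^ 2 ≤ x ^ k * x ^ 2 := by gcongr
    _ = x ^ (k + 2) := by ring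
    _ ≤ x ^ (k ^ 2) := pow_le_pow_right₀ (by linarith) (by nlinarith)

lemma exp_neg_sq_mul_sqrt_log_le {x : ℝ} (hx : 2 ≤ x) {k : ℕ} (hk : 2 ≤ k) :
    exp (-(k * √(log x)) ^ 2) ≤ 2⁻¹ ^ k * (x ^ 2)⁻¹ := by
  rw [mul_pow, sq_sqrt (log_nonneg (by linarith)), ← Nat.cast_pow, exp_neg, exp_nat_mul,
    exp_log (by linarith), inv_pow, ← mul_inv]
  exact inv_anti₀ (by positivity) (two_pow_mul_sq_le_pow_sq hx hk)

lemma sum_range_inv_add_two_sq_le_one (n : ℕ) :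
    ∑ j ∈ Finset.range n, (((j : ℝ) + 2) ^ 2)⁻¹ ≤ 1 :=
  calc ∑ j ∈ Finset.range n, (((j : ℝ) + 2) ^ 2)⁻¹
      ≤ ∑ j ∈ Finset.range n, (((j : ℝ) + 1)⁻¹ - (((j + 1 : ℕ) : ℝ) + 1)⁻¹) := by
        refine Finset.sum_le_sum fun j _ ↦ ?_
        rw [Nat.cast_succ, add_assoc, one_add_one_eq_two,
          inv_sub_inv (by positivity) (by positivity), show (j : ℝ) + 2 - (j + 1) = 1 by ring,
          one_div]
        exact inv_anti₀ (by positivity) (by nlinarith)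
    _ = 1 - ((n : ℝ) + 1)⁻¹ := by rw [Finset.sum_range_sub' fun j : ℕ ↦ ((j : ℝ) + 1)⁻¹]; simp
    _ ≤ 1 := by linarith [inv_pos.mpr (by positivity : (0 : ℝ) < n + 1)]

lemma ofReal_le_mul_one_add_tsum_indicator {α : Type*} {a : ℝ} (ha : 0 < a) (f : α → ℝ)
    (s : ℕ → Set α) (hs : ∀ m : ℕ, {x | (m + 1) * a < f x} ⊆ s m) (x : α) :
    ENNReal.ofReal (f x) ≤ ENNReal.ofReal a * (1 + ∑' m, (s m).indicator 1 x) := by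
  rcases le_or_gt (f x) 0 with hx | hx
  · simp [ENNReal.ofReal_of_nonpos hx]
  set k := ⌈f x / a⌉₊
  have hk : 1 ≤ k := Nat.one_le_iff_ne_zero.mpr (Nat.ceil_pos.mpr (div_pos hx ha)).ne'
  have hmem : ∀ m ∈ Finset.range (k - 1), x ∈ s m := fun m hm ↦ hs m <| by
    have hceil : (k : ℝ) < f x / a + 1 := Nat.ceil_lt_add_one (div_pos hx ha).le
    have hmk : ((m + 1 : ℕ) : ℝ) ≤ (k - 1 : ℕ) := by exact_mod_cast Finset.mem_range.mp hm
    push_cast [hk] at hmk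
    exact (lt_div_iff₀ ha).mp (by linarith)
  calc ENNReal.ofReal (f x) ≤ ENNReal.ofReal (a * k) :=
        ENNReal.ofReal_le_ofReal <| by rw [mul_comm, ← div_le_iff₀ ha]; exact Nat.le_ceil _
    _ = ENNReal.ofReal a * (1 + (k - 1 : ℕ)) := by
        rw [ENNReal.ofReal_mul ha.le, ENNReal.ofReal_natCast, ← Nat.cast_one, ← Nat.cast_add,
          Nat.add_sub_cancel' hk]
    _ ≤ ENNReal.ofReal a * (1 + ∑' m, (s m).indicator 1 x) := by
        gcongr
        calc ((k - 1 : ℕ) : ℝ≥0∞) = ∑ m ∈ Finset.range (k - 1), (s m).indicator 1 x := by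
              simp [Finset.sum_congr rfl fun m hm ↦
                Set.indicator_of_mem (hmem m hm) (1 : α → ℝ≥0∞)]
          _ ≤ ∑' m, (s m).indicator 1 x := ENNReal.sum_le_tsum _

variable {Ω : Type*} [MeasurableSpace Ω] {μ : Measure Ω}

lemma lintegral_ofReal_le_of_levels (f : Ω → ℝ) {a : ℝ} (ha : 0 < a) :
    ∫⁻ ω, ENNReal.ofReal (f ω) ∂μ ≤
      ENNReal.ofReal a * (μ Set.univ + ∑' m : ℕ, μ {ω | (m + 1) * a < f ω}) := by
  set s : ℕ → Set Ω := fun m ↦ toMeasurable μ {ω | (m + 1) * a < f ω}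
  have hs : ∀ m, MeasurableSet (s m) := fun m ↦ measurableSet_toMeasurable _ _
  calc ∫⁻ ω, ENNReal.ofReal (f ω) ∂μ
      ≤ ∫⁻ ω, ENNReal.ofReal a * (1 + ∑' m, (s m).indicator 1 ω) ∂μ :=
        lintegral_mono <| ofReal_le_mul_one_add_tsum_indicator ha f s
          fun m ↦ subset_toMeasurable _ _
    _ = ENNReal.ofReal a * (μ Set.univ + ∑' m, μ (s m)) := by
        rw [lintegral_const_mul' _ _ ENNReal.ofReal_ne_top, lintegral_add_left measurable_const,
          lintegral_tsum fun m ↦ (measurable_one.indicator (hs m)).aemeasurable]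
        simp [lintegral_indicator_one (hs _)]
    _ = ENNReal.ofReal a * (μ Set.univ + ∑' m : ℕ, μ {ω | (m + 1) * a < f ω}) := by
        simp only [s, measure_toMeasurable]

lemma measure_mul_lt_abs_le_of_tail {Y : Ω → ℝ} {β K M x : ℝ} (hK : 0 ≤ K)
    (hY : ∀ t : ℝ, 0 ≤ t → μ {ω | t * β < |Y ω|} ≤ ENNReal.ofReal (K * exp (-t ^ 2)))
    (hx : 2 ≤ x) (hM : β * √(log x) ≤ M) {k : ℕ} (hk : 2 ≤ k) :
    μ {ω | k * M < |Y ω|} ≤ ENNReal.ofReal (K * (2⁻¹ ^ k * (x ^ 2)⁻¹)) := by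
  have hlevel : (k * √(log x)) * β ≤ k * M := by
    rw [mul_assoc, mul_comm (√_)]
    exact mul_le_mul_of_nonneg_left hM k.cast_nonneg
  have hsub : {ω | k * M < |Y ω|} ⊆ {ω | (k * √(log x)) * β < |Y ω|} := fun ω hω ↦
    hlevel.trans_lt hω
  refine (measure_mono hsub).trans <| (hY _ (by positivity)).trans ?_
  gcongr
  exact exp_neg_sq_mul_sqrt_log_le hx hk

lemma measure_mul_lt_iSup_abs_le {n : ℕ} [Nonempty (Fin n)] {b : Fin n → ℝ}
    {X : Fin n → Ω → ℝ} {K M : ℝ} (hK : 0 ≤ K)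
    (hX : ∀ j, ∀ t : ℝ, 0 ≤ t →
      μ {ω | t * |b j| < |X j ω|} ≤ ENNReal.ofReal (K * exp (-t ^ 2)))
    (σ : Equiv.Perm (Fin n)) (hM : ∀ j, |b (σ j)| * √(log ((j : ℕ) + 2)) ≤ M)
    (k : ℕ) (hk : 2 ≤ k) :
    μ {ω | k * M < ⨆ j, |X j ω|} ≤ ENNReal.ofReal K * 2⁻¹ ^ k := by
  have hcover : {ω | k * M < ⨆ j, |X j ω|} ⊆ ⋃ j, {ω | k * M < |X (σ j) ω|} := fun ω hω ↦ by
    obtain ⟨j, hj⟩ := exists_lt_of_lt_ciSup (show k * M < ⨆ j, |X j ω| from hω)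
    exact Set.mem_iUnion.mpr ⟨σ.symm j, by simpa using hj⟩
  calc μ {ω | k * M < ⨆ j, |X j ω|}
      ≤ ∑ j, μ {ω | k * M < |X (σ j) ω|} :=
        (measure_mono hcover).trans (measure_iUnion_fintype_le _ _)
    _ ≤ ∑ j : Fin n, ENNReal.ofReal (K * (2⁻¹ ^ k * ((((j : ℕ) : ℝ) + 2) ^ 2)⁻¹)) :=
        Finset.sum_le_sum fun j _ ↦ measure_mul_lt_abs_le_of_tail hK (hX (σ j))
          (by linarith [(Nat.cast_nonneg j : (0 : ℝ) ≤ (j : ℕ))]) (hM j) hk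
    _ = ENNReal.ofReal (K * 2⁻¹ ^ k * ∑ j ∈ Finset.range n, (((j : ℝ) + 2) ^ 2)⁻¹) := by
        rw [← ENNReal.ofReal_sum_of_nonneg fun j _ ↦ by positivity,
          Fin.sum_univ_eq_sum_range (fun j ↦ K * (2⁻¹ ^ k * (((j : ℝ) + 2) ^ 2)⁻¹)) n,
          Finset.mul_sum]
        simp only [mul_assoc]
    _ ≤ ENNReal.ofReal (K * 2⁻¹ ^ k) := ENNReal.ofReal_le_ofReal <|
        mul_le_of_le_one_right (by positivity) (sum_range_inv_add_two_sq_le_one n)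
    _ = ENNReal.ofReal K * 2⁻¹ ^ k := by
        rw [ENNReal.ofReal_mul hK, ENNReal.ofReal_pow (by norm_num),
          ENNReal.ofReal_inv_of_pos (by norm_num), ENNReal.ofReal_ofNat]

lemma measure_pos_iSup_abs_eq_zero {n : ℕ} [Nonempty (Fin n)] {b : Fin n → ℝ}
    {X : Fin n → Ω → ℝ} {K : ℝ} (hK : 0 ≤ K)
    (hX : ∀ j, ∀ t : ℝ, 0 ≤ t →
      μ {ω | t * |b j| < |X j ω|} ≤ ENNReal.ofReal (K * exp (-t ^ 2)))
    (σ : Equiv.Perm (Fin n)) (hb : ∀ j, |b (σ j)| * √(log ((j : ℕ) + 2)) ≤ 0) :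
    μ {ω | 0 < ⨆ j, |X j ω|} = 0 := by
  have hlim : Filter.Tendsto (fun k : ℕ ↦ ENNReal.ofReal K * 2⁻¹ ^ k) Filter.atTop (nhds 0) := by
    simpa only [mul_zero] using ENNReal.Tendsto.const_mul
      (ENNReal.tendsto_pow_atTop_nhds_zero_of_lt_one (ENNReal.inv_lt_one.mpr ENNReal.one_lt_two))
      (Or.inr ENNReal.ofReal_ne_top)
  refine le_antisymm (ge_of_tendsto hlim ?_) zero_le
  filter_upwards [Filter.eventually_ge_atTop 2] with k hk
  simpa using measure_mul_lt_iSup_abs_le hK hX σ hb k hk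

lemma lintegral_ofReal_iSup_abs_le_of_tail [IsProbabilityMeasure μ] {n : ℕ} {b : Fin n → ℝ}
    {X : Fin n → Ω → ℝ} {K M : ℝ} (hK : 0 ≤ K)
    (hX : ∀ j, ∀ t : ℝ, 0 ≤ t →
      μ {ω | t * |b j| < |X j ω|} ≤ ENNReal.ofReal (K * exp (-t ^ 2)))
    (σ : Equiv.Perm (Fin n)) (hM : ∀ j, |b (σ j)| * √(log ((j : ℕ) + 2)) ≤ M) :
    ∫⁻ ω, ENNReal.ofReal (⨆ j, |X j ω|) ∂μ ≤ ENNReal.ofReal (2 * (1 + K) * M) := by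
  rcases isEmpty_or_nonempty (Fin n) with hn | hn
  · simp
  have hM0 : 0 ≤ M := (by positivity : 0 ≤ |b (σ hn.some)| * _).trans (hM hn.some)
  rcases hM0.eq_or_lt with rfl | hMpos
  · have hae : ∀ᵐ ω ∂μ, ENNReal.ofReal (⨆ j, |X j ω|) = 0 :=
      measure_mono_null (fun ω hω ↦ by simpa using hω) (measure_pos_iSup_abs_eq_zero hK hX σ hM)
    simp [lintegral_congr_ae hae]
  have hlevel : ∀ m : ℕ, μ {ω | (m + 1) * (2 * M) < ⨆ j, |X j ω|} ≤
      ENNReal.ofReal K * 2⁻¹ ^ (m + 1) := fun m ↦ by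
    have hk : (m + 1) * (2 * M) = ((2 * (m + 1) : ℕ) : ℝ) * M := by push_cast; ring
    rw [hk]
    exact (measure_mul_lt_iSup_abs_le hK hX σ hM _ (by omega)).trans <|
      mul_le_mul_right (pow_le_pow_right_of_le_one' (by norm_num) (by omega)) _
  calc ∫⁻ ω, ENNReal.ofReal (⨆ j, |X j ω|) ∂μ
      ≤ ENNReal.ofReal (2 * M) *
          (μ Set.univ + ∑' m : ℕ, μ {ω | (m + 1) * (2 * M) < ⨆ j, |X j ω|}) :=
        lintegral_ofReal_le_of_levels _ (by positivity)
    _ ≤ ENNReal.ofReal (2 * M) * (1 + ∑' m : ℕ, ENNReal.ofReal K * 2⁻¹ ^ (m + 1)) := by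
        rw [measure_univ]
        gcongr with m
        exact hlevel m
    _ = ENNReal.ofReal (2 * (1 + K) * M) := by
        rw [ENNReal.tsum_mul_left, ENNReal.tsum_geometric_add_one, ENNReal.one_sub_inv_two,
          ENNReal.mul_inv_cancel (by norm_num) (by norm_num), mul_one, ← ENNReal.ofReal_one,
          ← ENNReal.ofReal_add zero_le_one hK, ← ENNReal.ofReal_mul (by positivity)]
        ring_nf

lemma div_two_le_succ_mul_inv_add_two {c : ℝ} (hc : 0 ≤ c) (k : ℕ) :
    c / 2 ≤ (k + 1) * (c * ((k : ℝ) + 2)⁻¹) := by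
  rw [← mul_assoc, mul_comm _ c, mul_assoc, ← div_eq_mul_inv, div_eq_mul_one_div c 2]
  refine mul_le_mul_of_nonneg_left ?_ hc
  rw [div_le_div_iff₀ two_pos (by positivity)]
  linarith [k.cast_nonneg (α := ℝ)]

noncomputable def gaussianTailConst : ℝ := (√(2 * π))⁻¹ * exp (-1)

lemma gaussianTailConst_pos : 0 < gaussianTailConst := by
  unfold gaussianTailConst
  have := pi_pos
  positivity

lemma gaussianTailConst_mul_exp_le {v : ℝ≥0} (hv : v ≠ 0) (t : ℝ) :
    gaussianTailConst * exp (-t ^ 2) ≤ gaussianPDFReal 0 v ((t + 1) * √v) * √v := by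
  have hw : 0 < √(v : ℝ) := sqrt_pos.mpr (by positivity)
  have hexp : -1 + -t ^ 2 ≤ -((t + 1) * √v - 0) ^ 2 / (2 * v) := by
    rw [sub_zero, mul_pow, sq_sqrt v.coe_nonneg, le_div_iff₀ (by positivity)]
    nlinarith [mul_nonneg (sq_nonneg (t - 1)) v.coe_nonneg]
  rw [gaussianPDFReal, sqrt_mul (by positivity), mul_inv, mul_assoc, mul_assoc,
    mul_comm _ √(v : ℝ), ← mul_assoc (√(v : ℝ))⁻¹, inv_mul_cancel₀ hw.ne', one_mul,
    gaussianTailConst, mul_assoc, ← exp_add]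
  gcongr

lemma ofReal_le_gaussianReal_Ioi {v : ℝ≥0} (hv : v ≠ 0) {t : ℝ} (ht : 0 ≤ t) :
    ENNReal.ofReal (gaussianTailConst * exp (-t ^ 2)) ≤
      gaussianReal 0 v (Set.Ioi (t * √v)) := by
  have hw : 0 < √(v : ℝ) := sqrt_pos.mpr (by positivity)
  set d := gaussianPDFReal 0 v ((t + 1) * √v)
  have hdens : ∀ x ∈ Set.Ioc (t * √v) ((t + 1) * √v),
      ENNReal.ofReal d ≤ gaussianPDF 0 v x := fun x hx ↦ by
    refine ENNReal.ofReal_le_ofReal ?_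
    have hx0 : 0 ≤ x - 0 := by rw [sub_zero]; exact (by positivity : 0 ≤ t * √v).trans hx.1.le
    simp only [d, gaussianPDFReal]
    gcongr
    exact hx.2
  calc ENNReal.ofReal (gaussianTailConst * exp (-t ^ 2))
      ≤ ENNReal.ofReal d * volume (Set.Ioc (t * √v) ((t + 1) * √v)) := by
        rw [volume_Ioc, ← ENNReal.ofReal_mul (gaussianPDFReal_nonneg _ _ _)]
        exact ENNReal.ofReal_le_ofReal ((gaussianTailConst_mul_exp_le hv t).trans_eq (by ring))
    _ = ∫⁻ x in Set.Ioc (t * √v) ((t + 1) * √v), ENNReal.ofReal d :=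
        (setLIntegral_const _ _).symm
    _ ≤ ∫⁻ x in Set.Ioc (t * √v) ((t + 1) * √v), gaussianPDF 0 v x :=
        setLIntegral_mono (measurable_gaussianPDF 0 v) hdens
    _ ≤ ∫⁻ x in Set.Ioi (t * √v), gaussianPDF 0 v x :=
        lintegral_mono_set Set.Ioc_subset_Ioi_self
    _ = gaussianReal 0 v (Set.Ioi (t * √v)) := (gaussianReal_apply 0 hv _).symm

lemma measure_abs_le_mul_abs_le_of_map_eq_gaussianReal {X : Ω → ℝ} (hX : Measurable X)
    {b : ℝ} (hb : b ≠ 0) (hmap : μ.map X = gaussianReal 0 (b ^ 2).toNNReal) {t : ℝ} (ht : 0 ≤ t) :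
    μ {ω | |X ω| ≤ t * |b|} ≤ 1 - ENNReal.ofReal (gaussianTailConst * exp (-t ^ 2)) := by
  have hv : (b ^ 2).toNNReal ≠ 0 := by simpa using hb
  have hsqrt : √((b ^ 2).toNNReal : ℝ) = |b| := by
    rw [Real.coe_toNNReal _ (sq_nonneg b), sqrt_sq_eq_abs]
  calc μ {ω | |X ω| ≤ t * |b|} ≤ μ (X ⁻¹' (Set.Ioi (t * |b|))ᶜ) :=
        measure_mono fun ω (hω : |X ω| ≤ t * |b|) ↦
          show X ω ∉ Set.Ioi _ from not_lt.mpr ((le_abs_self (X ω)).trans hω)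
    _ = 1 - gaussianReal 0 (b ^ 2).toNNReal (Set.Ioi (t * |b|)) := by
        rw [← Measure.map_apply hX measurableSet_Ioi.compl, hmap,
          prob_compl_eq_one_sub measurableSet_Ioi]
    _ ≤ 1 - ENNReal.ofReal (gaussianTailConst * exp (-t ^ 2)) := by
        gcongr
        simpa only [hsqrt] using ofReal_le_gaussianReal_Ioi hv ht

lemma ofReal_mul_le_lintegral_iSup_abs [IsProbabilityMeasure μ] {ι : Type*} [Finite ι]
    {X : ι → Ω → ℝ} (hXm : ∀ j, Measurable (X j)) (hind : iIndepFun X μ) (S : Finset ι)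
    {s q : ℝ} (hs : 0 ≤ s) (hq : 0 ≤ q) (hS : ∀ j ∈ S, μ {ω | |X j ω| ≤ s} ≤ 1 - ENNReal.ofReal q) :
    ENNReal.ofReal (s * (1 - exp (-(#S * q)))) ≤ ∫⁻ ω, ENNReal.ofReal (⨆ j, |X j ω|) ∂μ := by
  have hball : MeasurableSet {x : ℝ | |x| ≤ s} :=
    measurableSet_le measurable_abs measurable_const
  set B := ⋂ j ∈ S, X j ⁻¹' {x | |x| ≤ s}
  have hBm : MeasurableSet B := Finset.measurableSet_biInter S fun j _ ↦ hXm j hball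
  have hB : μ B ≤ ENNReal.ofReal (exp (-(#S * q))) :=
    calc μ B = ∏ j ∈ S, μ {ω | |X j ω| ≤ s} :=
          hind.measure_inter_preimage_eq_mul S fun _ _ ↦ hball
      _ ≤ (1 - ENNReal.ofReal q) ^ #S := Finset.prod_le_pow_card _ _ _ hS
      _ ≤ ENNReal.ofReal (exp (-q)) ^ #S := by
          gcongr
          rw [← ENNReal.ofReal_one, ← ENNReal.ofReal_sub _ hq]
          exact ENNReal.ofReal_le_ofReal (by linarith [add_one_le_exp (-q)])
      _ = ENNReal.ofReal (exp (-(#S * q))) := by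
          rw [← ENNReal.ofReal_pow (exp_pos _).le, ← exp_nat_mul, mul_neg]
  have hcompl : Bᶜ ⊆ {ω | ENNReal.ofReal s ≤ ENNReal.ofReal (⨆ j, |X j ω|)} := fun ω hω ↦ by
    obtain ⟨j, -, hj⟩ : ∃ j ∈ S, s < |X j ω| := by simpa [B] using hω
    exact ENNReal.ofReal_le_ofReal <|
      hj.le.trans (le_ciSup (f := fun j ↦ |X j ω|) (Set.finite_range _).bddAbove j)
  calc ENNReal.ofReal (s * (1 - exp (-(#S * q))))
      = ENNReal.ofReal s * (1 - ENNReal.ofReal (exp (-(#S * q)))) := by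
        rw [ENNReal.ofReal_mul hs, ENNReal.ofReal_sub _ (exp_pos _).le, ENNReal.ofReal_one]
    _ ≤ ENNReal.ofReal s * μ Bᶜ := by
        rw [prob_compl_eq_one_sub hBm]
        gcongr
    _ ≤ ENNReal.ofReal s * μ {ω | ENNReal.ofReal s ≤ ENNReal.ofReal (⨆ j, |X j ω|)} := by
        gcongr
    _ ≤ ∫⁻ ω, ENNReal.ofReal (⨆ j, |X j ω|) ∂μ :=
        mul_meas_ge_le_lintegral₀
          (Measurable.iSup fun j ↦ (hXm j).abs).ennreal_ofReal.aemeasurable _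

lemma ofReal_mul_le_lintegral_iSup_abs_of_gaussian [IsProbabilityMeasure μ] {n : ℕ}
    {b : Fin n → ℝ} {X : Fin n → Ω → ℝ} (hXm : ∀ j, Measurable (X j)) (hind : iIndepFun X μ)
    (hmap : ∀ j, μ.map (X j) = gaussianReal 0 (b j ^ 2).toNNReal) (σ : Equiv.Perm (Fin n))
    (hσ : ∀ j j' : Fin n, j ≤ j' → |b (σ j')| ≤ |b (σ j)|) (k : Fin n) :
    ENNReal.ofReal
        ((1 - exp (-(gaussianTailConst / 2))) * (|b (σ k)| * √(log ((k : ℕ) + 2)))) ≤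
      ∫⁻ ω, ENNReal.ofReal (⨆ j, |X j ω|) ∂μ := by
  rcases eq_or_ne (b (σ k)) 0 with hbk | hbk
  · simp [hbk]
  set t := √(log ((k : ℕ) + 2))
  have ht : exp (-t ^ 2) = ((k : ℕ) + 2 : ℝ)⁻¹ := by
    rw [sq_sqrt (log_nonneg (by linarith [(k : ℕ).cast_nonneg (α := ℝ)])), exp_neg,
      exp_log (by positivity)]
  set q := gaussianTailConst * ((k : ℕ) + 2 : ℝ)⁻¹
  set S := (Finset.Iic k).map σ.toEmbedding
  have hS : ∀ j ∈ S, μ {ω | |X j ω| ≤ t * |b (σ k)|} ≤ 1 - ENNReal.ofReal q := by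
    intro j hj
    obtain ⟨i, hi, rfl⟩ := Finset.mem_map.mp hj
    have hbi := hσ i k (Finset.mem_Iic.mp hi)
    have hsub : {ω | |X (σ i) ω| ≤ t * |b (σ k)|} ⊆ {ω | |X (σ i) ω| ≤ t * |b (σ i)|} :=
      fun ω hω ↦ le_trans hω (mul_le_mul_of_nonneg_left hbi (sqrt_nonneg _))
    refine (measure_mono hsub).trans ?_
    have h := measure_abs_le_mul_abs_le_of_map_eq_gaussianReal (hXm (σ i))
      (abs_pos.mp ((abs_pos.mpr hbk).trans_le hbi)) (hmap (σ i)) (sqrt_nonneg _ : 0 ≤ t)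
    rwa [ht] at h
  have hcard : (#S : ℝ) = (k : ℕ) + 1 := by simp [S]
  refine le_trans (ENNReal.ofReal_le_ofReal ?_) (ofReal_mul_le_lintegral_iSup_abs hXm hind S
    (by positivity) (by positivity [gaussianTailConst_pos]) hS)
  rw [hcard, mul_comm, mul_comm t]
  gcongr
  exact div_two_le_succ_mul_inv_add_two gaussianTailConst_pos.le k

/-- Two lemmas of van Handel. Upper: if `P(|X_j| > t|b_j|) ≤ K e^{-t²}` (i.e.
`P(|X_j| > t) ≤ K e^{-t²/b_j²}`), then `E max_j |X_j| ≲_K max_j b_j^↓ √(ln(j+1))`.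
Lower: if the `X_j ~ N(0, b_j²)` are independent, then
`E max_j |X_j| ≳ max_j b_j^↓ √(ln(j+1))` with an absolute constant.
The non-increasing rearrangement is encoded via a sorting permutation `σ`. -/
theorem stmt15 :
    (∀ K : ℝ, 0 < K → ∃ C : ℝ, 0 < C ∧
      ∀ (Ω : Type) (_ : MeasurableSpace Ω) (μ : Measure Ω), IsProbabilityMeasure μ →
      ∀ (n : ℕ) (b : Fin n → ℝ) (X : Fin n → Ω → ℝ),
      (∀ j, ∀ t : ℝ, 0 ≤ t →
        μ {ω | t * |b j| < |X j ω|} ≤ ENNReal.ofReal (K * Real.exp (-t ^ 2))) →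
      ∀ σ : Equiv.Perm (Fin n), (∀ j j' : Fin n, j ≤ j' → |b (σ j')| ≤ |b (σ j)|) →
      ∫⁻ ω, ENNReal.ofReal (⨆ j, |X j ω|) ∂μ ≤
        ENNReal.ofReal (C * ⨆ j : Fin n,
          |b (σ j)| * Real.sqrt (Real.log ((j : ℕ) + 2)))) ∧
    (∃ c : ℝ, 0 < c ∧
      ∀ (Ω : Type) (_ : MeasurableSpace Ω) (μ : Measure Ω), IsProbabilityMeasure μ →
      ∀ (n : ℕ) (b : Fin n → ℝ) (X : Fin n → Ω → ℝ),
      (∀ j, Measurable (X j)) →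
      iIndepFun X μ →
      (∀ j, Measure.map (X j) μ = gaussianReal 0 (Real.toNNReal (b j ^ 2))) →
      ∀ σ : Equiv.Perm (Fin n), (∀ j j' : Fin n, j ≤ j' → |b (σ j')| ≤ |b (σ j)|) →
      ENNReal.ofReal (c * ⨆ j : Fin n,
          |b (σ j)| * Real.sqrt (Real.log ((j : ℕ) + 2))) ≤
        ∫⁻ ω, ENNReal.ofReal (⨆ j, |X j ω|) ∂μ) := by
  refine ⟨fun K hK ↦ ⟨2 * (1 + K), by positivity, fun Ω _ μ _ n b X hX σ _ ↦ ?_⟩,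
    ⟨1 - exp (-(gaussianTailConst / 2)), ?_, fun Ω _ μ _ n b X hXm hind hmap σ hσ ↦ ?_⟩⟩
  · exact lintegral_ofReal_iSup_abs_le_of_tail hK.le hX σ fun j ↦
      le_ciSup (f := fun j : Fin n ↦ |b (σ j)| * √(log ((j : ℕ) + 2)))
        (Set.finite_range _).bddAbove j
  · exact sub_pos.mpr (exp_lt_one_iff.mpr (by linarith [gaussianTailConst_pos]))
  · rcases isEmpty_or_nonempty (Fin n) with hn | hn
    · simp
    obtain ⟨k, hk⟩ :=
      exists_eq_ciSup_of_finite (f := fun j : Fin n ↦ |b (σ j)| * √(log ((j : ℕ) + 2)))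
    rw [← hk]
    exact ofReal_mul_le_lintegral_iSup_abs_of_gaussian hXm hind hmap σ hσ k
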